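/- arXiv:1408.2135 — 2 statements merged into one kernel-verified Lean document; each statement's English description precedes it below -/
import Mathlib

section
/- For convex bodies K, L in ℝ^n containing the origin in their interiors: Vol(conv(K ∪ (-L))) · Vol((K° + L°)°) ≤ Vol(K) · Vol(L). -/
/-!
For a convex body `S` with `0` in its interior, layer-cake integration gives
`∫ exp (-gauge S) = n! * vol S`. The polar of `K° + L°` is `P = {gauge K + gauge L ≤ 1}`, whose
gauge is `gauge K + gauge L`, and the gauge of `C = conv (K ∪ -L)` is the infimal convolution
of `gauge K` and `gauge L ∘ neg`. Subadditivity of the gauges then gives, for every `z`,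
`exp (-gauge C z) * ∫ exp (-(gauge K + gauge L)) ≤ ∫ exp (-gauge K (z + v)) * exp (-gauge L v) dv`,
and integrating in `z` yields `n!² * vol C * vol P ≤ n!² * vol K * vol L`.
-/

open MeasureTheory Set Real Module Filter Topology
open scoped ENNReal Pointwise RealInnerProductSpace Nat

theorem lintegral_exp_neg_mul_pow_Ioi (n : ℕ) :
    ∫⁻ s in Ioi (0 : ℝ), ENNReal.ofReal (exp (-s) * s ^ n) = n ! := by
  have h := GammaIntegral_convergent (s := n + 1) (by positivity)
  have h' := Gamma_eq_integral (s := n + 1) (by positivity)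
  simp only [add_sub_cancel_right, rpow_natCast, Gamma_nat_eq_factorial] at h h'
  have hnonneg : 0 ≤ᵐ[volume.restrict (Ioi 0)] fun s : ℝ => exp (-s) * s ^ n :=
    (ae_restrict_iff' measurableSet_Ioi).2 (ae_of_all _ fun s (hs : 0 < s) => by positivity)
  rw [← ofReal_integral_eq_lintegral_ofReal h hnonneg, ← h', ENNReal.ofReal_natCast]

theorem ofReal_exp_neg_mul_le_of_forall_lt {g : ℝ} {a b : ℝ≥0∞}
    (h : ∀ t, g < t → ENNReal.ofReal (exp (-t)) * a ≤ b) :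
    ENNReal.ofReal (exp (-g)) * a ≤ b := by
  refine ENNReal.le_of_forall_lt_one_mul_le fun c hc => ?_
  rcases eq_or_ne c 0 with rfl | hc₀
  · simp
  have hc_pos : 0 < c.toReal := ENNReal.toReal_pos hc₀ hc.ne_top
  have hc_lt : c.toReal < 1 := ENNReal.toReal_lt_of_lt_ofReal (by simpa using hc)
  have hexp : ENNReal.ofReal (exp (-(g - log c.toReal))) = c * ENNReal.ofReal (exp (-g)) := by
    rw [neg_sub, exp_sub, exp_log hc_pos, div_eq_mul_inv, ← exp_neg,
      ENNReal.ofReal_mul hc_pos.le, ENNReal.ofReal_toReal hc.ne_top]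
  rw [← mul_assoc, ← hexp]
  exact h _ (by linarith [log_neg hc_pos hc_lt])

theorem lintegral_lintegral_add_mul {G : Type*} [MeasurableSpace G] [AddGroup G]
    [MeasurableAdd₂ G] (μ : Measure G) [SFinite μ] [μ.IsAddRightInvariant] {f g : G → ℝ≥0∞}
    (hf : Measurable f) (hg : Measurable g) :
    ∫⁻ z, ∫⁻ v, f (z + v) * g v ∂μ ∂μ = (∫⁻ x, f x ∂μ) * ∫⁻ x, g x ∂μ := by
  rw [lintegral_lintegral_swap ((hf.comp measurable_add).mul (hg.comp measurable_snd)).aemeasurable]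
  have hinner : ∀ v, ∫⁻ z, f (z + v) * g v ∂μ = (∫⁻ x, f x ∂μ) * g v := fun v => by
    rw [lintegral_mul_const _ (f := fun z => f (z + v)) (hf.comp (measurable_add_const v)),
      lintegral_add_right_eq_self]
  simp_rw [hinner]
  exact lintegral_const_mul _ hg

section Gauge

variable {E : Type*} [NormedAddCommGroup E] [NormedSpace ℝ E]

theorem convexOn_gauge {s : Set E} (hs : Convex ℝ s) (habs : Absorbent ℝ s) :
    ConvexOn ℝ univ (gauge s) :=
  ⟨convex_univ, fun x _ y _ a b ha hb _ => by
    simpa only [gauge_smul_of_nonneg ha, gauge_smul_of_nonneg hb, smul_eq_mul] using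
      gauge_add_le hs habs (a • x) (b • y)⟩

theorem gauge_setOf_le_one {N : E → ℝ} (hN₀ : ∀ x, 0 ≤ N x)
    (hN : ∀ t : ℝ, 0 < t → ∀ x, N (t • x) = t * N x) : gauge {x | N x ≤ 1} = N := by
  funext x
  have hset : {r ∈ Ioi (0 : ℝ) | r⁻¹ • x ∈ {x | N x ≤ 1}} = Ioi 0 ∩ Ici (N x) := by
    ext r
    simp only [mem_Ioi, mem_ofPred_eq, mem_inter_iff, mem_Ici]
    refine and_congr_right fun hr => ?_
    rw [hN _ (inv_pos.2 hr), inv_mul_le_iff₀ hr, mul_one]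
  rw [gauge_def', hset]
  rcases (hN₀ x).eq_or_lt with h | h
  · rw [← h, inter_eq_left.2 Ioi_subset_Ici_self, csInf_Ioi]
  · rw [inter_eq_right.2 (Ici_subset_Ioi.2 h), csInf_Ici]

theorem exists_sub_eq_gauge_add_gauge_le {K L : Set E} (hK : Convex ℝ K) (hL : Convex ℝ L)
    (hK₀ : K ∈ 𝓝 0) (hLne : L.Nonempty) {z : E} {t : ℝ}
    (ht : gauge (convexHull ℝ (K ∪ -L)) z < t) :
    ∃ u w, z = u - w ∧ gauge K u + gauge L w ≤ t := by
  have habs : Absorbent ℝ (convexHull ℝ (K ∪ -L)) :=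
    absorbent_nhds_zero (mem_of_superset hK₀ (subset_union_left.trans (subset_convexHull ℝ _)))
  obtain ⟨b, hb, hbt, x, hx, rfl⟩ := exists_lt_of_gauge_lt habs ht
  rw [hK.convexHull_union hL.neg ⟨0, mem_of_mem_nhds hK₀⟩ hLne.neg, mem_convexJoin] at hx
  obtain ⟨x, hx, y, hy, p, q, hp, hq, hpq, rfl⟩ := hx
  refine ⟨(b * p) • x, (b * q) • -y, by
    change b • _ = _
    rw [smul_add, smul_smul, smul_smul, smul_neg, sub_neg_eq_add], ?_⟩
  calc gauge K ((b * p) • x) + gauge L ((b * q) • -y) ≤ b * p + b * q :=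
        add_le_add (gauge_le_of_mem (by positivity) (smul_mem_smul_set hx))
          (gauge_le_of_mem (by positivity) (smul_mem_smul_set (mem_neg.1 hy)))
    _ ≤ t := by rw [← mul_add, hpq, mul_one]; exact hbt.le

end Gauge

section LayerCake

variable {E : Type*} [NormedAddCommGroup E] [NormedSpace ℝ E] [FiniteDimensional ℝ E]
  [MeasurableSpace E] [BorelSpace E] (μ : Measure E) [μ.IsAddHaarMeasure]

theorem lintegral_exp_neg_eq_factorial_mul {N : E → ℝ} (hN_meas : Measurable N)
    (hN₀ : ∀ x, 0 ≤ N x) (hN : ∀ t : ℝ, 0 < t → ∀ x, N (t • x) = t * N x) :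
    ∫⁻ x, ENNReal.ofReal (exp (-N x)) ∂μ = (finrank ℝ E)! * μ {x | N x < 1} := by
  have hlevel : ∀ s : ℝ, ENNReal.ofReal |exp (-s) * -1| * μ {x | N x < s} =
      (Ioi 0).indicator
        (fun s => ENNReal.ofReal (exp (-s) * s ^ finrank ℝ E) * μ {x | N x < 1}) s := by
    intro s
    rcases lt_or_ge 0 s with hs | hs
    · have hscale : {x | N x < s} = s • {x | N x < 1} := by
        ext x
        rw [mem_smul_set_iff_inv_smul_mem₀ hs.ne', mem_ofPred_eq, mem_ofPred_eq,
          hN _ (inv_pos.2 hs), inv_mul_lt_iff₀ hs, mul_one]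
      rw [indicator_of_mem (mem_Ioi.2 hs), hscale, Measure.addHaar_smul, mul_neg_one, abs_neg,
        abs_of_pos (exp_pos _), abs_of_pos (by positivity), ← mul_assoc,
        ENNReal.ofReal_mul (exp_pos _).le]
    · have hempty : {x | N x < s} = ∅ :=
        eq_empty_of_forall_notMem fun x hx => (hN₀ x).not_gt (lt_of_lt_of_le hx hs)
      rw [indicator_of_notMem (fun h : s ∈ Ioi 0 => hs.not_gt h), hempty, measure_empty, mul_zero]
  -- layer cake, followed by the substitution `t = exp (-s)`
  have himage : (fun s : ℝ => exp (-s)) '' univ = Ioi 0 := by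
    rw [image_univ, ← Real.range_exp]
    exact (Equiv.neg ℝ).surjective.range_comp exp
  rw [lintegral_eq_lintegral_meas_lt μ (f := fun x => exp (-N x))
      (ae_of_all _ fun x => (exp_pos _).le) (by fun_prop), ← himage,
    lintegral_image_eq_lintegral_abs_deriv_mul MeasurableSet.univ
      (fun s _ => (hasDerivAt_neg s).exp.hasDerivWithinAt)
      (exp_injective.comp neg_injective).injOn]
  simp_rw [exp_lt_exp, neg_lt_neg_iff, Measure.restrict_univ, hlevel]
  rw [lintegral_indicator measurableSet_Ioi, lintegral_mul_const _ (by fun_prop),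
    lintegral_exp_neg_mul_pow_Ioi]

theorem lintegral_exp_neg_gauge {s : Set E} (hs : Convex ℝ s) (hs₀ : s ∈ 𝓝 0) :
    ∫⁻ x, ENNReal.ofReal (exp (-gauge s x)) ∂μ = (finrank ℝ E)! * μ s := by
  rw [lintegral_exp_neg_eq_factorial_mul μ (continuous_gauge hs hs₀).measurable gauge_nonneg
      fun t ht x => by rw [gauge_smul_of_nonneg ht.le, smul_eq_mul],
    setOfPred_gauge_lt_one_eq_interior hs hs₀,
    measure_interior_of_null_frontier (hs.addHaar_frontier μ)]

theorem lintegral_exp_neg_gauge_add_gauge {K L : Set E} (hK : Convex ℝ K) (hK₀ : K ∈ 𝓝 0)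
    (hL : Convex ℝ L) (hL₀ : L ∈ 𝓝 0) :
    ∫⁻ x, ENNReal.ofReal (exp (-(gauge K x + gauge L x))) ∂μ =
      (finrank ℝ E)! * μ {x | gauge K x + gauge L x ≤ 1} := by
  have hcont : Continuous fun x => gauge K x + gauge L x :=
    (continuous_gauge hK hK₀).add (continuous_gauge hL hL₀)
  have hgauge : gauge {x | gauge K x + gauge L x ≤ 1} = fun x => gauge K x + gauge L x :=
    gauge_setOf_le_one (fun x => add_nonneg (gauge_nonneg x) (gauge_nonneg x)) fun t ht x => by
      rw [gauge_smul_of_nonneg ht.le, gauge_smul_of_nonneg ht.le, smul_eq_mul, smul_eq_mul,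
        mul_add]
  have hconv : Convex ℝ {x | gauge K x + gauge L x ≤ 1} := by
    simpa using ((convexOn_gauge hK (absorbent_nhds_zero hK₀)).add
      (convexOn_gauge hL (absorbent_nhds_zero hL₀))).convex_le 1
  have hlt : {x | gauge K x + gauge L x < 1} ∈ 𝓝 (0 : E) :=
    (isOpen_lt hcont continuous_const).mem_nhds (by simp)
  have hP₀ : {x | gauge K x + gauge L x ≤ 1} ∈ 𝓝 (0 : E) :=
    mem_of_superset hlt (ofPred_subset_ofPred.2 fun _ => le_of_lt)
  simpa only [hgauge] using lintegral_exp_neg_gauge μ hconv hP₀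

end LayerCake

section Convolution

variable {E : Type*} [NormedAddCommGroup E] [NormedSpace ℝ E] [MeasurableSpace E] [BorelSpace E]
  (μ : Measure E) [μ.IsAddRightInvariant]

theorem ofReal_exp_neg_gauge_convexHull_mul_le {K L : Set E} (hK : Convex ℝ K) (hK₀ : K ∈ 𝓝 0)
    (hL : Convex ℝ L) (hL₀ : L ∈ 𝓝 0) (z : E) :
    ENNReal.ofReal (exp (-gauge (convexHull ℝ (K ∪ -L)) z)) *
        ∫⁻ v, ENNReal.ofReal (exp (-(gauge K v + gauge L v))) ∂μ ≤
      ∫⁻ v, ENNReal.ofReal (exp (-gauge K (z + v))) * ENNReal.ofReal (exp (-gauge L v)) ∂μ := by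
  refine ofReal_exp_neg_mul_le_of_forall_lt fun t ht => ?_
  obtain ⟨u, w, rfl, huw⟩ :=
    exists_sub_eq_gauge_add_gauge_le hK hL hK₀ ⟨0, mem_of_mem_nhds hL₀⟩ ht
  rw [← lintegral_sub_right_eq_self _ w, ← lintegral_const_mul' _ _ ENNReal.ofReal_ne_top]
  refine lintegral_mono fun v => ?_
  have hKu : gauge K (u - w + v) ≤ gauge K u + gauge K (v - w) := by
    rw [show u - w + v = u + (v - w) by abel]
    exact gauge_add_le hK (absorbent_nhds_zero hK₀) _ _
  have hLw : gauge L v ≤ gauge L w + gauge L (v - w) := by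
    simpa using gauge_add_le hL (absorbent_nhds_zero hL₀) w (v - w)
  rw [← ENNReal.ofReal_mul (exp_pos _).le, ← ENNReal.ofReal_mul (exp_pos _).le, ← exp_add,
    ← exp_add]
  exact ENNReal.ofReal_le_ofReal (exp_le_exp.2 (by linarith))

end Convolution

section Polar

variable {E : Type*} [NormedAddCommGroup E] [InnerProductSpace ℝ E]

/-- The one-sided polar; Mathlib's `polar` bounds `‖⟪x, y⟫‖` instead. -/
def innerPolar (s : Set E) : Set E := {y | ∀ x ∈ s, ⟪x, y⟫ ≤ 1}

theorem inner_le_gauge_of_mem_innerPolar {s : Set E} (hs : Absorbent ℝ s) {y : E}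
    (hy : y ∈ innerPolar s) (z : E) : ⟪z, y⟫ ≤ gauge s z := by
  rw [gauge_def]
  refine le_csInf hs.gauge_set_nonempty ?_
  rintro r ⟨hr, x, hx, rfl⟩
  rw [real_inner_smul_left]
  exact mul_le_of_le_one_right (le_of_lt hr) (hy x hx)

theorem exists_mem_innerPolar_lt_inner [CompleteSpace E] {s : Set E} (hs : Convex ℝ s)
    (hsc : IsClosed s) (hs₀ : (0 : E) ∈ s) {r : ℝ} (hr : 0 < r) {z : E} (hz : z ∉ r • s) :
    ∃ y ∈ innerPolar s, r < ⟪z, y⟫ := by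
  obtain ⟨f, u, hfs, hfz⟩ :=
    geometric_hahn_banach_closed_point (hs.smul r) (hsc.smul_of_ne_zero hr.ne') hz
  have hu : 0 < u := by simpa using hfs 0 (zero_mem_smul_set hs₀)
  have hf : ∀ x, ⟪x, (r / u) • (InnerProductSpace.toDual ℝ E).symm f⟫ = r * f x / u := fun x => by
    rw [real_inner_smul_right, real_inner_comm, InnerProductSpace.toDual_symm_apply,
      div_mul_eq_mul_div]
  refine ⟨(r / u) • (InnerProductSpace.toDual ℝ E).symm f, fun x hx => ?_, ?_⟩
  · rw [hf, div_le_one hu, ← smul_eq_mul, ← map_smul]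
    exact (hfs _ (smul_mem_smul_set hx)).le
  · rw [hf, lt_div_iff₀ hu]
    exact mul_lt_mul_of_pos_left hfz hr

theorem isLUB_inner_innerPolar [CompleteSpace E] {s : Set E} (hs : Convex ℝ s)
    (hsc : IsClosed s) (hs₀ : s ∈ 𝓝 0) (z : E) :
    IsLUB (innerSL ℝ z '' innerPolar s) (gauge s z) := by
  refine ⟨forall_mem_image.2 fun y hy =>
    inner_le_gauge_of_mem_innerPolar (absorbent_nhds_zero hs₀) hy z, fun b hb => ?_⟩
  by_contra! hlt
  have hzero : (0 : E) ∈ innerPolar s := fun x _ => by simp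
  have hb₀ : 0 ≤ b := by simpa using hb (mem_image_of_mem _ hzero)
  obtain ⟨r, hbr, hr⟩ := exists_between hlt
  have hz : z ∉ r • s := fun h => (gauge_le_of_mem (hb₀.trans hbr.le) h).not_gt hr
  obtain ⟨y, hy, hry⟩ :=
    exists_mem_innerPolar_lt_inner hs hsc (mem_of_mem_nhds hs₀) (hb₀.trans_lt hbr) hz
  exact (hb (mem_image_of_mem _ hy)).not_gt (hbr.trans hry)

theorem innerPolar_innerPolar_add_innerPolar [CompleteSpace E] {K L : Set E} (hK : Convex ℝ K)
    (hKc : IsClosed K) (hK₀ : K ∈ 𝓝 0) (hL : Convex ℝ L) (hLc : IsClosed L) (hL₀ : L ∈ 𝓝 0) :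
    innerPolar (innerPolar K + innerPolar L) = {z | gauge K z + gauge L z ≤ 1} := by
  ext z
  have h := (isLUB_inner_innerPolar hK hKc hK₀ z).add (isLUB_inner_innerPolar hL hLc hL₀ z)
  rw [← image_add] at h
  rw [mem_ofPred_eq, isLUB_le_iff h, mem_upperBounds, forall_mem_image]
  exact forall₂_congr fun y _ => by rw [innerSL_apply_apply, real_inner_comm]

end Polar

theorem measure_convexHull_union_neg_mul_measure_innerPolar_le {E : Type*}
    [NormedAddCommGroup E] [InnerProductSpace ℝ E] [FiniteDimensional ℝ E] [MeasurableSpace E]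
    [BorelSpace E] (μ : Measure E) [μ.IsAddHaarMeasure] {K L : Set E}
    (hK : Convex ℝ K) (hKc : IsClosed K) (hK₀ : K ∈ 𝓝 0)
    (hL : Convex ℝ L) (hLc : IsClosed L) (hL₀ : L ∈ 𝓝 0) :
    μ (convexHull ℝ (K ∪ -L)) * μ (innerPolar (innerPolar K + innerPolar L)) ≤ μ K * μ L := by
  set C := convexHull ℝ (K ∪ -L)
  have hC : Convex ℝ C := convex_convexHull ℝ _
  have hC₀ : C ∈ 𝓝 0 := mem_of_superset hK₀ (subset_union_left.trans (subset_convexHull ℝ _))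
  have hmeas : ∀ {s : Set E}, Convex ℝ s → s ∈ 𝓝 0 →
      Measurable fun x => ENNReal.ofReal (exp (-gauge s x)) := fun hs hs₀ =>
    (continuous_gauge hs hs₀).measurable.neg.exp.ennreal_ofReal
  set c : ℝ≥0∞ := ↑(finrank ℝ E)!
  have key : (c * μ C) * (c * μ {z | gauge K z + gauge L z ≤ 1}) ≤ (c * μ K) * (c * μ L) :=
    calc _ = ∫⁻ z, ENNReal.ofReal (exp (-gauge C z)) *
          ∫⁻ v, ENNReal.ofReal (exp (-(gauge K v + gauge L v))) ∂μ ∂μ := by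
          rw [lintegral_mul_const _ (hmeas hC hC₀), lintegral_exp_neg_gauge μ hC hC₀,
            lintegral_exp_neg_gauge_add_gauge μ hK hK₀ hL hL₀]
      _ ≤ ∫⁻ z, ∫⁻ v, ENNReal.ofReal (exp (-gauge K (z + v))) *
          ENNReal.ofReal (exp (-gauge L v)) ∂μ ∂μ :=
        lintegral_mono fun z => ofReal_exp_neg_gauge_convexHull_mul_le μ hK hK₀ hL hL₀ z
      _ = _ := by
        rw [lintegral_lintegral_add_mul μ (hmeas hK hK₀) (hmeas hL hL₀),
          lintegral_exp_neg_gauge μ hK hK₀, lintegral_exp_neg_gauge μ hL hL₀]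
  rw [innerPolar_innerPolar_add_innerPolar hK hKc hK₀ hL hLc hL₀]
  rwa [mul_mul_mul_comm, mul_mul_mul_comm _ (μ K),
    ENNReal.mul_le_mul_iff_right (by simp [c, Nat.factorial_ne_zero])
      (by simp [c, ENNReal.mul_eq_top])] at key

theorem volume_convexHull_mul_volume_polar_sum_le (n : ℕ)
    (K L : Set (EuclideanSpace ℝ (Fin n)))
    (hK : Convex ℝ K) (hKc : IsCompact K) (hKi : (0 : EuclideanSpace ℝ (Fin n)) ∈ interior K)
    (hL : Convex ℝ L) (hLc : IsCompact L) (hLi : (0 : EuclideanSpace ℝ (Fin n)) ∈ interior L) :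
    volume (convexHull ℝ (K ∪ -L)) *
        volume {z : EuclideanSpace ℝ (Fin n) |
          ∀ y ∈ ({u | ∀ x ∈ K, ⟪x, u⟫ ≤ 1} + {u | ∀ x ∈ L, ⟪x, u⟫ ≤ 1} :
            Set (EuclideanSpace ℝ (Fin n))), ⟪y, z⟫ ≤ 1} ≤
      volume K * volume L :=
  measure_convexHull_union_neg_mul_measure_innerPolar_le volume hK hKc.isClosed
    (mem_interior_iff_mem_nhds.1 hKi) hL hLc.isClosed (mem_interior_iff_mem_nhds.1 hLi)
end

section
/- Let K = conv{0, e_1, ..., e_n} and L = conv{0, λ_1 e_1, ..., λ_n e_n} in ℝ^n with λ_i > 0. Then Vol(conv(K ∪ (-L))) = (1/n!) · ∏_{i=1}^n (1 + λ_i). -/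
/-!
`conv (K ∪ -L)` is `P(λ) = skewCrossPolytope λ = {x | ∑ i, max (x i) (-x i / λ i) ≤ 1}`: a
sublevel set of a convex function that vanishes at `0` and equals `1` at the vertices `e_i` and
`-λ_i e_i`. On the closed orthant where the coordinates in `S` are `≤ 0` and the others `≥ 0`,
`P(λ)` is the image of the corner simplex `{y ≥ 0, ∑ y ≤ 1}` under the diagonal map scaling the
coordinates in `S` by `-λ_i`, so it has volume `(∏ i ∈ S, λ i) · vol(simplex)`. The orthants
overlap in null sets, and summing over all `S` gives `∏ i, (1 + λ i) · vol(simplex)`. For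
`λ = 1`, `P(λ)` is the `ℓ¹` unit ball, of known volume `2ⁿ / n!`, which yields
`vol(simplex) = 1 / n!`.
-/

open MeasureTheory Finset
open scoped ENNReal Pointwise

section Convex

variable {𝕜 E ι : Type*} [AddCommGroup E]

theorem convexHull_convexHull_union_neg_convexHull [Ring 𝕜] [PartialOrder 𝕜] [Module 𝕜 E]
    (s t : Set E) :
    convexHull 𝕜 (convexHull 𝕜 s ∪ -convexHull 𝕜 t) = convexHull 𝕜 (s ∪ -t) := by
  rw [← convexHull_neg, convexHull_convexHull_union_left, convexHull_convexHull_union_right]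

theorem Convex.sum_smul_mem_of_zero_mem [Field 𝕜] [LinearOrder 𝕜] [IsStrictOrderedRing 𝕜]
    [Module 𝕜 E] {s : Set E} (hs : Convex 𝕜 s) (h0 : (0 : E) ∈ s)
    {t : Finset ι} {w : ι → 𝕜} {z : ι → E} (hw₀ : ∀ i ∈ t, 0 ≤ w i)
    (hw₁ : ∑ i ∈ t, w i ≤ 1) (hz : ∀ i ∈ t, z i ∈ s) : ∑ i ∈ t, w i • z i ∈ s := by
  rcases (sum_nonneg hw₀).eq_or_lt with hW | hW
  · rw [sum_eq_zero fun i hi => by rw [(sum_eq_zero_iff_of_nonneg hw₀).1 hW.symm i hi, zero_smul]]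
    exact h0
  · have := (hs.starConvex h0).smul_mem (hs.centerMass_mem hw₀ hW hz) hW.le hw₁
    rwa [centerMass, smul_smul, mul_inv_cancel₀ hW.ne', one_smul] at this

end Convex

section MaxNegDiv

variable {𝕜 : Type*} [Field 𝕜] [LinearOrder 𝕜] [IsStrictOrderedRing 𝕜]

theorem max_neg_div_of_nonneg {t c : 𝕜} (hc : 0 < c) (ht : 0 ≤ t) : max t (-t / c) = t :=
  max_eq_left <| (div_nonpos_of_nonpos_of_nonneg (neg_nonpos.2 ht) hc.le).trans ht

theorem max_neg_div_of_nonpos {t c : 𝕜} (hc : 0 < c) (ht : t ≤ 0) : max t (-t / c) = -t / c :=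
  max_eq_right <| ht.trans (div_nonneg (neg_nonneg.2 ht) hc.le)

end MaxNegDiv

section SkewCrossPolytope

variable {ι : Type*} [Fintype ι]

def skewCrossPolytope (l : ι → ℝ) : Set (ι → ℝ) := {x | ∑ i, max (x i) (-x i / l i) ≤ 1}

theorem convex_skewCrossPolytope (l : ι → ℝ) : Convex ℝ (skewCrossPolytope l) := by
  have hcoord (i : ι) : ConvexOn ℝ Set.univ fun x : ι → ℝ => max (x i) (-x i / l i) :=
    ((LinearMap.proj i).convexOn convex_univ).sup
      ((-(l i)⁻¹ • LinearMap.proj (R := ℝ) (φ := fun _ : ι => ℝ) i).convexOn convex_univ |>.congr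
        fun x _ => by simp [div_eq_inv_mul])
  have hsum : ConvexOn ℝ Set.univ fun x : ι → ℝ => ∑ i, max (x i) (-x i / l i) := by
    simpa only [← Finset.sum_fn] using Finset.sum_induction _ (ConvexOn ℝ Set.univ)
      (fun _ _ => ConvexOn.add) (convexOn_const 0 convex_univ) fun i _ => hcoord i
  simpa [skewCrossPolytope] using hsum.convex_le 1

theorem measurableSet_skewCrossPolytope (l : ι → ℝ) : MeasurableSet (skewCrossPolytope l) :=
  (isClosed_le (by fun_prop) continuous_const).measurableSet

def closedOrthant (S : Finset ι) : Set (ι → ℝ) := {x | (∀ i ∈ S, x i ≤ 0) ∧ ∀ i ∉ S, 0 ≤ x i}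

theorem measurableSet_closedOrthant (S : Finset ι) : MeasurableSet (closedOrthant S) := by
  simp only [closedOrthant, Set.ofPred_and, Set.ofPred_forall]
  measurability

theorem iUnion_closedOrthant : ⋃ S : Finset ι, closedOrthant S = Set.univ := by
  classical
  refine Set.eq_univ_of_forall fun x =>
    Set.mem_iUnion.2 ⟨{i | x i ≤ 0}.toFinset, ?_, fun i hi => ?_⟩
  · simp
  · simpa using (not_le.1 (by simpa using hi)).le

theorem aedisjoint_closedOrthant {S T : Finset ι} (hST : S ≠ T) :
    AEDisjoint volume (closedOrthant S) (closedOrthant T) := by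
  obtain ⟨i, hi⟩ : ∃ i, ¬(i ∈ S ↔ i ∈ T) := by
    by_contra! h
    exact hST (Finset.ext h)
  refine measure_mono_null (fun x ⟨⟨hS, hS'⟩, hT, hT'⟩ => ?_) (Measure.pi_hyperplane _ i 0)
  by_cases h : i ∈ S
  · exact le_antisymm (hS i h) (hT' i (by tauto))
  · exact le_antisymm (hT i (by tauto)) (hS' i h)

theorem volume_eq_sum_inter_closedOrthant {s : Set (ι → ℝ)} (hs : NullMeasurableSet s) :
    volume s = ∑ S : Finset ι, volume (s ∩ closedOrthant S) := by
  conv_lhs => rw [← Set.inter_univ s, ← iUnion_closedOrthant, Set.inter_iUnion]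
  rw [measure_iUnion₀ (fun S T hST =>
      (aedisjoint_closedOrthant hST).mono Set.inter_subset_right Set.inter_subset_right)
    fun S => hs.inter (measurableSet_closedOrthant S).nullMeasurableSet, tsum_fintype]

theorem sum_max_single_neg_div [DecidableEq ι] (l : ι → ℝ) (i : ι) (c : ℝ) :
    ∑ j, max (Pi.single (M := fun _ => ℝ) i c j) (-Pi.single (M := fun _ => ℝ) i c j / l j) =
      max c (-c / l i) := by
  rw [Fintype.sum_eq_single i fun j hj => by simp [hj]]
  simp

theorem convexHull_single_union_neg_eq_skewCrossPolytope [DecidableEq ι] {l : ι → ℝ}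
    (hl : ∀ i, 0 < l i) :
    convexHull ℝ (insert 0 (Set.range fun i => Pi.single i 1) ∪
      -insert 0 (Set.range fun i => Pi.single i (l i))) = skewCrossPolytope l := by
  apply (convexHull_min _ (convex_skewCrossPolytope l)).antisymm
  · intro x hx
    set m : ι → ℝ := fun i => max (x i) (-x i / l i)
    set c : ι → ℝ := fun i => if 0 ≤ x i then 1 else -l i
    have hx_eq : x = ∑ i, m i • Pi.single i (c i) := by
      simp_rw [← Pi.single_smul', smul_eq_mul, Finset.univ_sum_single]
      ext i
      by_cases h : 0 ≤ x i
      · simp [m, c, h, max_neg_div_of_nonneg (hl i) h]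
      · simp [m, c, h, max_neg_div_of_nonpos (hl i) (not_le.1 h).le, (hl i).ne']
    rw [hx_eq]
    refine (convex_convexHull ℝ _).sum_smul_mem_of_zero_mem
      (subset_convexHull ℝ _ (.inl (Set.mem_insert _ _))) (fun i _ => ?_) hx fun i _ => ?_
    · rcases le_total 0 (x i) with h | h
      · exact h.trans (le_max_left _ _)
      · exact (div_nonneg (neg_nonneg.2 h) (hl i).le).trans (le_max_right _ _)
    · apply subset_convexHull
      by_cases h : 0 ≤ x i
      · exact .inl (.inr ⟨i, by simp [c, h]⟩)
      · exact .inr (.inr ⟨i, by simp [c, h, Pi.single_neg]⟩)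
  · have h0 : (0 : ι → ℝ) ∈ skewCrossPolytope l := by simp [skewCrossPolytope]
    simp only [Set.union_subset_iff, Set.insert_subset_iff, Set.range_subset_iff, Set.neg_insert,
      Set.neg_range, neg_zero, ← Pi.single_neg]
    refine ⟨⟨h0, fun i => ?_⟩, h0, fun i => ?_⟩ <;>
      simp only [skewCrossPolytope, Set.mem_ofPred_eq, sum_max_single_neg_div]
    · exact (max_neg_div_of_nonneg (hl i) zero_le_one).le
    · rw [max_neg_div_of_nonpos (hl i) (neg_nonpos.2 (hl i).le), neg_neg, div_self (hl i).ne']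

variable (ι) in
def cornerSimplex : Set (ι → ℝ) := {y | (∀ i, 0 ≤ y i) ∧ ∑ i, y i ≤ 1}

noncomputable def orthantScaling [DecidableEq ι] (l : ι → ℝ) (S : Finset ι) : (ι → ℝ) →ₗ[ℝ] ι → ℝ :=
  Matrix.toLin' (Matrix.diagonal fun i => if i ∈ S then -(l i)⁻¹ else 1)

theorem det_orthantScaling [DecidableEq ι] (l : ι → ℝ) (S : Finset ι) :
    LinearMap.det (orthantScaling l S) = ∏ i ∈ S, -(l i)⁻¹ := by
  rw [orthantScaling, LinearMap.det_toLin', Matrix.det_diagonal, prod_ite_mem_eq]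

theorem skewCrossPolytope_inter_closedOrthant [DecidableEq ι] {l : ι → ℝ} (hl : ∀ i, 0 < l i)
    (S : Finset ι) :
    skewCrossPolytope l ∩ closedOrthant S = orthantScaling l S ⁻¹' cornerSimplex ι := by
  ext x
  set e : ι → ℝ := fun i => if i ∈ S then -(l i)⁻¹ else 1
  have hsign (i : ι) : 0 ≤ e i * x i ↔ (i ∈ S → x i ≤ 0) ∧ (i ∉ S → 0 ≤ x i) := by
    by_cases h : i ∈ S
    · simp [e, h, ← mul_neg, mul_nonneg_iff_of_pos_left (inv_pos.2 (hl i))]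
    · simp [e, h]
  have hmax (h : ∀ i, 0 ≤ e i * x i) (i : ι) : max (x i) (-x i / l i) = e i * x i := by
    by_cases hi : i ∈ S
    · rw [max_neg_div_of_nonpos (hl i) (((hsign i).1 (h i)).1 hi)]
      simp [e, hi, div_eq_inv_mul]
    · simp [e, hi, max_neg_div_of_nonneg (hl i) (((hsign i).1 (h i)).2 hi)]
  have horthant : (∀ i, 0 ≤ e i * x i) ↔ x ∈ closedOrthant S := by
    simp only [hsign, forall_and]
    rfl
  simp only [skewCrossPolytope, cornerSimplex, Set.mem_inter_iff, Set.mem_ofPred_eq,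
    Set.mem_preimage, orthantScaling, Matrix.toLin'_apply, Matrix.mulVec_diagonal, ← horthant]
  exact ⟨fun ⟨h1, h2⟩ => ⟨h2, by simpa only [hmax h2] using h1⟩,
    fun ⟨h1, h2⟩ => ⟨by simpa only [hmax h1] using h2, h1⟩⟩

theorem volume_skewCrossPolytope_inter_closedOrthant [DecidableEq ι] {l : ι → ℝ}
    (hl : ∀ i, 0 < l i) (S : Finset ι) :
    volume (skewCrossPolytope l ∩ closedOrthant S) =
      ENNReal.ofReal (∏ i ∈ S, l i) * volume (cornerSimplex ι) := by
  have hdet := det_orthantScaling l S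
  have hne : ∏ i ∈ S, -(l i)⁻¹ ≠ 0 := prod_ne_zero_iff.2 fun i _ => by simp [(hl i).ne']
  rw [skewCrossPolytope_inter_closedOrthant hl, Measure.addHaar_preimage_linearMap _ (hdet ▸ hne),
    hdet, abs_inv, abs_prod, ← prod_inv_distrib]
  simp [abs_of_pos, hl]

theorem volume_skewCrossPolytope {l : ι → ℝ} (hl : ∀ i, 0 < l i) :
    volume (skewCrossPolytope l) = ENNReal.ofReal (∏ i, (1 + l i)) * volume (cornerSimplex ι) := by
  classical
  rw [volume_eq_sum_inter_closedOrthant (measurableSet_skewCrossPolytope l).nullMeasurableSet,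
    prod_one_add, powerset_univ, ENNReal.ofReal_sum_of_nonneg fun S _ =>
      prod_nonneg fun i _ => (hl i).le, sum_mul]
  exact sum_congr rfl fun S _ => volume_skewCrossPolytope_inter_closedOrthant hl S

theorem volume_cornerSimplex :
    volume (cornerSimplex ι) = ENNReal.ofReal (1 / (Fintype.card ι).factorial) := by
  rcases isEmpty_or_nonempty ι with hι | hι
  · have : cornerSimplex ι = Set.univ := Set.eq_univ_of_forall fun y => ⟨isEmptyElim, by simp⟩
    simp [this, Measure.volume_pi_eq_dirac 0]
  have hball : skewCrossPolytope (fun _ : ι => (1 : ℝ)) =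
      {x | (∑ i, |x i| ^ (1 : ℝ)) ^ (1 / (1 : ℝ)) ≤ 1} := by
    simp [skewCrossPolytope, abs_eq_max_neg]
  have h := volume_sum_rpow_le (ι := ι) le_rfl 1
  rw [← hball, volume_skewCrossPolytope fun _ => one_pos] at h
  norm_num [Real.Gamma_nat_eq_factorial] at h
  rw [← mul_one_div, ENNReal.ofReal_mul (by positivity), ENNReal.ofReal_pow zero_le_two,
    ENNReal.ofReal_ofNat] at h
  exact (ENNReal.mul_right_inj (by simp) (by simp)).1 h

theorem EuclideanSpace.volume_image_toLp (s : Set (ι → ℝ)) :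
    volume (WithLp.toLp 2 '' s : Set (EuclideanSpace ℝ ι)) = volume s :=
  (MeasurableEquiv.toLp 2 (ι → ℝ)).image_eq_preimage_symm s ▸
    (EuclideanSpace.volume_preserving_symm_measurableEquiv_toLp ι).measure_preimage_equiv s

theorem EuclideanSpace.convexHull_single_union_neg_eq_image_skewCrossPolytope [DecidableEq ι]
    {l : ι → ℝ} (hl : ∀ i, 0 < l i) :
    convexHull ℝ (insert 0 (Set.range fun i => EuclideanSpace.single i 1) ∪
      -insert 0 (Set.range fun i => EuclideanSpace.single i (l i))) =
      WithLp.toLp 2 '' skewCrossPolytope l := by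
  rw [← convexHull_single_union_neg_eq_skewCrossPolytope hl,
    show (WithLp.toLp 2 : (ι → ℝ) → EuclideanSpace ℝ ι) =
      (WithLp.linearEquiv 2 ℝ (ι → ℝ)).symm.toLinearMap from rfl,
    LinearMap.image_convexHull]
  congr 1
  simp [Set.image_union, Set.image_insert_eq, ← Set.range_comp, Set.neg_range, Function.comp_def,
    PiLp.toLp_single]

end SkewCrossPolytope

theorem volume_convexHull_simplex_scaled_simplex (n : ℕ) (l : Fin n → ℝ)
    (hl : ∀ i, 0 < l i)
    (K L : Set (EuclideanSpace ℝ (Fin n)))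
    (hK : K = convexHull ℝ (insert (0 : EuclideanSpace ℝ (Fin n))
      (Set.range fun i => EuclideanSpace.single i (1 : ℝ))))
    (hL : L = convexHull ℝ (insert (0 : EuclideanSpace ℝ (Fin n))
      (Set.range fun i => EuclideanSpace.single i (l i)))) :
    volume (convexHull ℝ (K ∪ -L)) =
      ENNReal.ofReal ((∏ i, (1 + l i)) / n.factorial) := by
  rw [hK, hL, convexHull_convexHull_union_neg_convexHull,
    EuclideanSpace.convexHull_single_union_neg_eq_image_skewCrossPolytope hl,
    EuclideanSpace.volume_image_toLp, volume_skewCrossPolytope hl, volume_cornerSimplex,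
    ← ENNReal.ofReal_mul (prod_nonneg fun i _ => by linarith [hl i]), Fintype.card_fin, mul_one_div]
end
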